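/- Let a₁, a₂, b₁, b₂ > 0 and define θ* ∈ [0,π] as follows: θ* = 0 if |a₂ − b₂| > a₁ + b₁; θ* = π if |a₁ − b₁| > a₂ + b₂; and otherwise θ* = arccos( (a₂² + b₂² − a₁² − b₁²) / (2(a₁b₁ + a₂b₂)) ). Then ∫₀^{2π} ∫₀^{2π} ln | a₁ + b₁ e^{iθ} + (b₂ − a₂ e^{iθ}) e^{iφ} | dφ dθ = 4π² ln( (a₁ + b₁ + |a₁ − b₁|)/2 ) + 2π ∫_{−π+θ*}^{π−θ*} ( ln | b₂ + a₂ e^{iθ} | − ln | a₁ − b₁ e^{iθ} | ) dθ. (Note (a₁ + b₁ + |a₁ − b₁|)/2 = max(a₁, b₁), and the integrand of the last integral is nonnegative on the domain of integration.) -/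

import Mathlib

open Real

/-- The angle `θ*` of Appendix D: `θ* = 0` if `|a₂ − b₂| > a₁ + b₁`,
`θ* = π` if `|a₁ − b₁| > a₂ + b₂`, and otherwise
`θ* = arccos((a₂² + b₂² − a₁² − b₁²)/(2(a₁b₁ + a₂b₂)))`. -/
noncomputable def thetaStar (a₁ a₂ b₁ b₂ : ℝ) : ℝ :=
  if |a₂ - b₂| > a₁ + b₁ then 0
  else if |a₁ - b₁| > a₂ + b₂ then Real.pi
  else Real.arccos ((a₂ ^ 2 + b₂ ^ 2 - a₁ ^ 2 - b₁ ^ 2) / (2 * (a₁ * b₁ + a₂ * b₂)))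

/-!
For fixed `θ`, Jensen's formula (the mean of `log ‖A + B e^{iφ}‖` over `φ` is `log (max ‖A‖ ‖B‖)`)
turns the inner integral into `2π log (max ‖a₁ + b₁e^{iθ}‖ ‖b₂ - a₂e^{iθ}‖)`. The substitution
`θ ↦ π - θ` turns these two moduli into `‖a₁ - b₁e^{iθ}‖` and `‖b₂ + a₂e^{iθ}‖`, and
`‖b₂ + a₂e^{iθ}‖² - ‖a₁ - b₁e^{iθ}‖² = 2(a₁b₁ + a₂b₂)(cos θ + c)` with
`c = (a₂² + b₂² - a₁² - b₁²) / (2(a₁b₁ + a₂b₂))` and `θ* = arccos c`; so the maximum is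
`‖b₂ + a₂e^{iθ}‖` for `|θ| < π - θ*` and `‖a₁ - b₁e^{iθ}‖` for `π - θ* < |θ| ≤ π`. Integrating
`log ‖a₁ - b₁e^{iθ}‖` over the full period, by Jensen's formula again, gives `2π log (max a₁ b₁)`;
what is left is the correction over `|θ| < π - θ*`.
-/

open MeasureTheory Set intervalIntegral

theorem integral_eq_integral_add_integral_sub_of_abs_lt {E : Type*} [NormedAddCommGroup E]
    [NormedSpace ℝ E] {f g h : ℝ → E} {r s : ℝ} (hs : 0 ≤ s) (hsr : s ≤ r)
    (hg : IntervalIntegrable g volume (-r) r) (hh : IntervalIntegrable h volume (-s) s)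
    (hfg : ∀ x, s < |x| → |x| < r → f x = g x) (hfh : ∀ x, |x| < s → f x = h x) :
    ∫ x in -r..r, f x = (∫ x in -r..r, g x) + ∫ x in -s..s, (h x - g x) := by
  have hleft : EqOn f g (Ioo (-r) (-s)) := fun x hx => by
    apply hfg x <;> rw [abs_of_neg (by linarith [hx.2])] <;> linarith [hx.1, hx.2]
  have hmid : EqOn f h (Ioo (-s) s) := fun x hx => hfh x (abs_lt.2 hx)
  have hright : EqOn f g (Ioo s r) := fun x hx => by
    apply hfg x <;> rw [abs_of_pos (by linarith [hx.1])] <;> linarith [hx.1, hx.2]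
  have hg_sub : ∀ {a b : ℝ}, -r ≤ a → a ≤ b → b ≤ r → IntervalIntegrable g volume a b :=
    fun ha hab hb => hg.mono_set <| by
      rw [uIcc_of_le hab, uIcc_of_le (by linarith)]; exact Icc_subset_Icc ha hb
  have hg₁ := hg_sub le_rfl (neg_le_neg hsr) (by linarith)
  have hg₂ := hg_sub (neg_le_neg hsr) (by linarith) hsr
  have hg₃ := hg_sub (by linarith) hsr le_rfl
  have hf₁ : IntervalIntegrable f volume (-r) (-s) :=
    hg₁.congr_uIoo (by rw [uIoo_of_le (by linarith)]; exact hleft.symm)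
  have hf₂ : IntervalIntegrable f volume (-s) s :=
    hh.congr_uIoo (by rw [uIoo_of_le (by linarith)]; exact hmid.symm)
  have hf₃ : IntervalIntegrable f volume s r :=
    hg₃.congr_uIoo (by rw [uIoo_of_le (by linarith)]; exact hright.symm)
  rw [← integral_add_adjacent_intervals (hf₁.trans hf₂) hf₃,
    ← integral_add_adjacent_intervals hf₁ hf₂,
    ← integral_add_adjacent_intervals (hg₁.trans hg₂) hg₃,
    ← integral_add_adjacent_intervals hg₁ hg₂, integral_sub hh hg₂,
    integral_congr_Ioo_of_le (by linarith) hleft, integral_congr_Ioo_of_le (by linarith) hmid,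
    integral_congr_Ioo_of_le (by linarith) hright]
  abel

theorem cos_lt_of_arccos_lt {c φ : ℝ} (h₀ : 0 ≤ φ) (hπ : φ ≤ π) (h : arccos c < φ) :
    cos φ < c := by
  by_contra! hle
  have := arccos_le_arccos hle
  rw [arccos_cos h₀ hπ] at this
  linarith

theorem lt_cos_of_lt_arccos {c φ : ℝ} (h₀ : 0 ≤ φ) (hπ : φ ≤ π) (h : φ < arccos c) :
    c < cos φ := by
  by_contra! hle
  have := arccos_le_arccos hle
  rw [arccos_cos h₀ hπ] at this
  linarith

theorem norm_ofReal_add_mul_exp_sq (p q θ : ℝ) :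
    ‖(p : ℂ) + q * Complex.exp (θ * Complex.I)‖ ^ 2 = p ^ 2 + q ^ 2 + 2 * p * q * cos θ := by
  rw [Complex.sq_norm, Complex.normSq_apply]
  simp only [Complex.add_re, Complex.ofReal_re, Complex.mul_re, Complex.exp_ofReal_mul_I_re,
    Complex.ofReal_im, Complex.exp_ofReal_mul_I_im, zero_mul, sub_zero, Complex.add_im,
    Complex.mul_im, add_zero, zero_add]
  linear_combination q ^ 2 * sin_sq_add_cos_sq θ

theorem norm_ofReal_sub_mul_exp_sq (p q θ : ℝ) :
    ‖(p : ℂ) - q * Complex.exp (θ * Complex.I)‖ ^ 2 = p ^ 2 + q ^ 2 - 2 * p * q * cos θ := by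
  have h := norm_ofReal_add_mul_exp_sq p (-q) θ
  push_cast at h
  rw [neg_mul, ← sub_eq_add_neg] at h
  linear_combination h

theorem exp_ofReal_pi_sub_mul_I (θ : ℝ) :
    Complex.exp ((π - θ : ℝ) * Complex.I) = -(starRingEnd ℂ) (Complex.exp (θ * Complex.I)) := by
  rw [← Complex.exp_conj, map_mul, Complex.conj_ofReal, Complex.conj_I, Complex.ofReal_sub,
    sub_mul, Complex.exp_sub, Complex.exp_pi_mul_I, mul_neg, Complex.exp_neg, neg_div, one_div]

theorem norm_ofReal_add_mul_exp_pi_sub (p q θ : ℝ) :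
    ‖(p : ℂ) + q * Complex.exp ((π - θ : ℝ) * Complex.I)‖
      = ‖(p : ℂ) - q * Complex.exp (θ * Complex.I)‖ := by
  rw [exp_ofReal_pi_sub_mul_I, ← Complex.norm_conj ((p : ℂ) - _), map_sub, map_mul,
    Complex.conj_ofReal, Complex.conj_ofReal, mul_neg, ← sub_eq_add_neg]

theorem norm_ofReal_sub_mul_exp_pi_sub (p q θ : ℝ) :
    ‖(p : ℂ) - q * Complex.exp ((π - θ : ℝ) * Complex.I)‖
      = ‖(p : ℂ) + q * Complex.exp (θ * Complex.I)‖ := by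
  simpa [sub_eq_add_neg] using norm_ofReal_add_mul_exp_pi_sub p (-q) θ

theorem intervalIntegrable_log_norm_add_mul_exp (A B : ℂ) (a b : ℝ) :
    IntervalIntegrable (fun θ : ℝ => log ‖A + B * Complex.exp (θ * Complex.I)‖) volume a b := by
  refine MeromorphicOn.intervalIntegrable_log_norm fun x _ => AnalyticAt.meromorphicAt ?_
  have h : AnalyticAt ℝ (fun θ : ℝ => (θ : ℂ) * Complex.I) x :=
    (Complex.ofRealCLM.analyticAt x).mul analyticAt_const
  exact analyticAt_const.add (analyticAt_const.mul ((analyticAt_cexp.restrictScalars).comp h))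

theorem intervalIntegrable_log_norm_sub_mul_exp (A B : ℂ) (a b : ℝ) :
    IntervalIntegrable (fun θ : ℝ => log ‖A - B * Complex.exp (θ * Complex.I)‖) volume a b := by
  simpa [sub_eq_add_neg] using intervalIntegrable_log_norm_add_mul_exp A (-B) a b

theorem add_mul_exp_eq_circleMap (A B : ℂ) (θ : ℝ) :
    A + B * Complex.exp (θ * Complex.I) = circleMap A ‖B‖ (θ + B.arg) := by
  rw [circleMap, Complex.ofReal_add, add_mul, Complex.exp_add, ← mul_assoc, mul_right_comm,
    Complex.norm_mul_exp_arg_mul_I]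

theorem periodic_log_norm_add_mul_exp (A B : ℂ) :
    Function.Periodic (fun θ : ℝ => log ‖A + B * Complex.exp (θ * Complex.I)‖) (2 * π) := by
  intro θ
  simp only [add_mul_exp_eq_circleMap, add_right_comm θ, periodic_circleMap A ‖B‖ (θ + B.arg)]

theorem integral_log_norm_add_mul_exp (A B : ℂ) :
    ∫ θ in (0 : ℝ)..2 * π, log ‖A + B * Complex.exp (θ * Complex.I)‖
      = 2 * π * log (max ‖A‖ ‖B‖) := by
  rcases eq_or_ne B 0 with rfl | hB
  · simp
  have hB' : ‖B‖ ≠ 0 := norm_ne_zero_iff.2 hB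
  have hcircle : ∫ θ in (0 : ℝ)..2 * π, log ‖circleMap A ‖B‖ θ‖ = 2 * π * log (max ‖A‖ ‖B‖) := by
    have h := circleAverage_log_norm_sub_const_eq_log_radius_add_posLog (a := 0) (c := A) hB'
    rw [posLog_eq_log_max_one (by positivity), ← log_mul hB' (by positivity),
      mul_max_of_nonneg _ _ (norm_nonneg _), mul_one, sub_zero, mul_inv_cancel_left₀ hB',
      circleAverage_def, smul_eq_mul] at h
    simp only [sub_zero] at h
    rw [max_comm, ← h]
    field_simp
  have hperiodic : Function.Periodic (fun θ : ℝ => log ‖circleMap A ‖B‖ θ‖) (2 * π) :=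
    (periodic_circleMap A ‖B‖).comp (fun z => log ‖z‖)
  simp only [add_mul_exp_eq_circleMap]
  rw [intervalIntegral.integral_comp_add_right (fun θ => log ‖circleMap A ‖B‖ θ‖), zero_add,
    add_comm (2 * π), hperiodic.intervalIntegral_add_eq B.arg 0, zero_add, hcircle]

theorem integral_log_norm_ofReal_sub_mul_exp (p q : ℝ) :
    ∫ θ in -π..π, log ‖(p : ℂ) - q * Complex.exp (θ * Complex.I)‖
      = 2 * π * log (max |p| |q|) := by
  have h := (periodic_log_norm_add_mul_exp p (-q)).intervalIntegral_add_eq (-π) 0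
  rw [neg_add_eq_sub, two_mul, add_sub_cancel_right, zero_add,
    ← two_mul, integral_log_norm_add_mul_exp] at h
  simpa [sub_eq_add_neg] using h

theorem norm_sq_add_sub_norm_sq_sub (a₁ a₂ b₁ b₂ θ : ℝ) :
    ‖(b₂ : ℂ) + a₂ * Complex.exp (θ * Complex.I)‖ ^ 2
        - ‖(a₁ : ℂ) - b₁ * Complex.exp (θ * Complex.I)‖ ^ 2
      = (a₂ ^ 2 + b₂ ^ 2 - a₁ ^ 2 - b₁ ^ 2) + 2 * (a₁ * b₁ + a₂ * b₂) * cos θ := by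
  rw [norm_ofReal_add_mul_exp_sq, norm_ofReal_sub_mul_exp_sq]
  ring

section SixVertex

variable {a₁ a₂ b₁ b₂ : ℝ}

/-- The first two branches of `thetaStar` are where the argument of `arccos` leaves `[-1, 1]`. -/
theorem thetaStar_eq_arccos (ha₁ : 0 < a₁) (ha₂ : 0 < a₂) (hb₁ : 0 < b₁) (hb₂ : 0 < b₂) :
    thetaStar a₁ a₂ b₁ b₂
      = arccos ((a₂ ^ 2 + b₂ ^ 2 - a₁ ^ 2 - b₁ ^ 2) / (2 * (a₁ * b₁ + a₂ * b₂))) := by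
  have hK : 0 < 2 * (a₁ * b₁ + a₂ * b₂) := by positivity
  unfold thetaStar
  split_ifs with h₁ h₂
  · have hsq : (a₁ + b₁) ^ 2 < (a₂ - b₂) ^ 2 := by
      rw [← sq_abs (a₂ - b₂)]; exact pow_lt_pow_left₀ h₁ (by positivity) two_ne_zero
    rw [eq_comm, arccos_eq_zero, le_div_iff₀ hK]
    nlinarith
  · have hsq : (a₂ + b₂) ^ 2 < (a₁ - b₁) ^ 2 := by
      rw [← sq_abs (a₁ - b₁)]; exact pow_lt_pow_left₀ h₂ (by positivity) two_ne_zero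
    rw [eq_comm, arccos_eq_pi, div_le_iff₀ hK]
    nlinarith
  · rfl

theorem thetaStar_nonneg (a₁ a₂ b₁ b₂ : ℝ) : 0 ≤ thetaStar a₁ a₂ b₁ b₂ := by
  unfold thetaStar
  split_ifs
  exacts [le_rfl, pi_pos.le, arccos_nonneg _]

theorem thetaStar_le_pi (a₁ a₂ b₁ b₂ : ℝ) : thetaStar a₁ a₂ b₁ b₂ ≤ π := by
  unfold thetaStar
  split_ifs
  exacts [pi_pos.le, le_rfl, arccos_le_pi _]

theorem norm_sub_mul_exp_le_norm_add_mul_exp (ha₁ : 0 < a₁) (ha₂ : 0 < a₂) (hb₁ : 0 < b₁)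
    (hb₂ : 0 < b₂) {θ : ℝ} (hθ : |θ| < π - thetaStar a₁ a₂ b₁ b₂) :
    ‖(a₁ : ℂ) - b₁ * Complex.exp (θ * Complex.I)‖
      ≤ ‖(b₂ : ℂ) + a₂ * Complex.exp (θ * Complex.I)‖ := by
  have hK : 0 < 2 * (a₁ * b₁ + a₂ * b₂) := by positivity
  have hθπ : |θ| ≤ π := by linarith [thetaStar_nonneg a₁ a₂ b₁ b₂]
  rw [thetaStar_eq_arccos ha₁ ha₂ hb₁ hb₂] at hθ
  have hcos := cos_lt_of_arccos_lt (φ := π - |θ|) (by linarith) (by linarith [abs_nonneg θ])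
    (by linarith)
  rw [cos_pi_sub, cos_abs, lt_div_iff₀ hK] at hcos
  rw [← sq_le_sq₀ (norm_nonneg _) (norm_nonneg _)]
  linarith [norm_sq_add_sub_norm_sq_sub a₁ a₂ b₁ b₂ θ]

theorem norm_add_mul_exp_le_norm_sub_mul_exp (ha₁ : 0 < a₁) (ha₂ : 0 < a₂) (hb₁ : 0 < b₁)
    (hb₂ : 0 < b₂) {θ : ℝ} (hθ : π - thetaStar a₁ a₂ b₁ b₂ < |θ|) (hθπ : |θ| ≤ π) :
    ‖(b₂ : ℂ) + a₂ * Complex.exp (θ * Complex.I)‖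
      ≤ ‖(a₁ : ℂ) - b₁ * Complex.exp (θ * Complex.I)‖ := by
  have hK : 0 < 2 * (a₁ * b₁ + a₂ * b₂) := by positivity
  rw [thetaStar_eq_arccos ha₁ ha₂ hb₁ hb₂] at hθ
  have hcos := lt_cos_of_lt_arccos (φ := π - |θ|) (by linarith) (by linarith [abs_nonneg θ])
    (by linarith)
  rw [cos_pi_sub, cos_abs, div_lt_iff₀ hK] at hcos
  rw [← sq_le_sq₀ (norm_nonneg _) (norm_nonneg _)]
  linarith [norm_sq_add_sub_norm_sq_sub a₁ a₂ b₁ b₂ θ]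

theorem integral_log_max_norm (ha₁ : 0 < a₁) (ha₂ : 0 < a₂) (hb₁ : 0 < b₁) (hb₂ : 0 < b₂) :
    ∫ θ in (0 : ℝ)..2 * π, log (max ‖(a₁ : ℂ) + b₁ * Complex.exp (θ * Complex.I)‖
        ‖(b₂ : ℂ) - a₂ * Complex.exp (θ * Complex.I)‖)
      = 2 * π * log (max a₁ b₁)
        + ∫ θ in -(π - thetaStar a₁ a₂ b₁ b₂)..(π - thetaStar a₁ a₂ b₁ b₂),
            (log ‖(b₂ : ℂ) + a₂ * Complex.exp (θ * Complex.I)‖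
              - log ‖(a₁ : ℂ) - b₁ * Complex.exp (θ * Complex.I)‖) := by
  have hreflect := integral_comp_sub_left (a := -π) (b := π) (fun θ : ℝ =>
    log (max ‖(a₁ : ℂ) + b₁ * Complex.exp (θ * Complex.I)‖
      ‖(b₂ : ℂ) - a₂ * Complex.exp (θ * Complex.I)‖)) π
  rw [sub_self, sub_neg_eq_add, ← two_mul] at hreflect
  have hsplit := integral_eq_integral_add_integral_sub_of_abs_lt
    (f := fun θ : ℝ => log (max ‖(a₁ : ℂ) - b₁ * Complex.exp (θ * Complex.I)‖
      ‖(b₂ : ℂ) + a₂ * Complex.exp (θ * Complex.I)‖))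
    (sub_nonneg.2 (thetaStar_le_pi a₁ a₂ b₁ b₂))
    (sub_le_self _ (thetaStar_nonneg a₁ a₂ b₁ b₂))
    (intervalIntegrable_log_norm_sub_mul_exp _ _ _ _)
    (intervalIntegrable_log_norm_add_mul_exp _ _ _ _)
    (fun θ hθ hθπ => by
      rw [max_eq_left (norm_add_mul_exp_le_norm_sub_mul_exp ha₁ ha₂ hb₁ hb₂ hθ hθπ.le)])
    (fun θ hθ => by
      rw [max_eq_right (norm_sub_mul_exp_le_norm_add_mul_exp ha₁ ha₂ hb₁ hb₂ hθ)])
  rw [← hreflect]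
  simp only [norm_ofReal_add_mul_exp_pi_sub, norm_ofReal_sub_mul_exp_pi_sub]
  rw [hsplit, integral_log_norm_ofReal_sub_mul_exp, abs_of_pos ha₁, abs_of_pos hb₁]

end SixVertex

/-- identity (D.4) of the paper: for positive `a₁, a₂, b₁, b₂`,
`∫₀^{2π}∫₀^{2π} ln|a₁ + b₁e^{iθ} + (b₂ − a₂e^{iθ})e^{iφ}| dφ dθ`
`= 4π² ln((a₁ + b₁ + |a₁ − b₁|)/2)`
`+ 2π ∫_{−π+θ*}^{π−θ*} ( ln|b₂ + a₂e^{iθ}| − ln|a₁ − b₁e^{iθ}| ) dθ`. -/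
theorem stmt_15 (a₁ a₂ b₁ b₂ : ℝ)
    (h1 : 0 < a₁) (h2 : 0 < a₂) (h3 : 0 < b₁) (h4 : 0 < b₂) :
    (∫ θ in (0 : ℝ)..(2 * π), ∫ φ in (0 : ℝ)..(2 * π),
        Real.log (norm ((a₁ : ℂ) + (b₁ : ℂ) * Complex.exp (θ * Complex.I)
          + ((b₂ : ℂ) - (a₂ : ℂ) * Complex.exp (θ * Complex.I))
              * Complex.exp (φ * Complex.I))))
      = 4 * π ^ 2 * Real.log ((a₁ + b₁ + |a₁ - b₁|) / 2)
        + 2 * π * (∫ θ in (-(π - thetaStar a₁ a₂ b₁ b₂))..(π - thetaStar a₁ a₂ b₁ b₂),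
            (Real.log (norm ((b₂ : ℂ) + (a₂ : ℂ) * Complex.exp (θ * Complex.I)))
              - Real.log (norm ((a₁ : ℂ) - (b₁ : ℂ) * Complex.exp (θ * Complex.I))))) := by
  have hmax : (a₁ + b₁ + |a₁ - b₁|) / 2 = max a₁ b₁ := by grind
  simp only [integral_log_norm_add_mul_exp]
  rw [intervalIntegral.integral_const_mul, integral_log_max_norm h1 h2 h3 h4, hmax]
  ring
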